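/- arXiv:2209.01761 — 2 statements merged into one kernel-verified Lean document; each statement's English description precedes it below -/
import Mathlib

section
/- (Corollary 1: lower bound under a unital map, Eq. (14)) If Φ is additionally a unital quantum channel on B(H) (i.e. Φ(𝟙) = 𝟙, where 𝟙 is the identity on H), then for any input state ρ_in = Σ_{i=1}^r p_i |p_i⟩⟨p_i|, the chain of inequalities ΔS ≥ L_otm ≥ 0 holds; in particular Σ_{i=1}^r e^{−C(Φ(|p_i⟩⟨p_i|), ρ_out)} ≤ 1. -/
/-!
Diagonalise `ρ_out = ∑ₖ λₖ |uₖ⟩⟨uₖ|` and put `w i k = ⟨uₖ|Φ(|pᵢ⟩⟨pᵢ|)|uₖ⟩ ≥ 0`. Trace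
preservation makes every row of `w` a probability vector, unitality (`∑ᵢ |pᵢ⟩⟨pᵢ| ≤ 𝟙`) bounds
every column sum by `1`, and `pᵢ Φ(|pᵢ⟩⟨pᵢ|) ≤ ρ_out` forces `w i k = 0` whenever `λₖ = 0`.
As `Cᵢ = C(Φ(|pᵢ⟩⟨pᵢ|), ρ_out) = -∑ₖ w i k ln λₖ`, Jensen's inequality for `exp` gives
`e^{-Cᵢ} ≤ ∑ₖ w i k λₖ`, and summing over `i` gives `∑ᵢ e^{-Cᵢ} ≤ ∑ₖ λₖ = 1`.

For `ΔS ≥ L_otm`: by linearity `S(ρ_out) = ∑ᵢ pᵢ Cᵢ`, while `S(ρ_in) = -∑ᵢ pᵢ ln pᵢ`, and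
concavity of `ln` (Gibbs' inequality) gives `∑ᵢ pᵢ (Cᵢ + ln pᵢ) ≥ -ln ∑ᵢ e^{-Cᵢ}`.
-/

open scoped Kronecker BigOperators ComplexOrder

namespace QCE

variable {ι : Type*} [Fintype ι] [DecidableEq ι]

/-- Apply a real function to a matrix via the spectral decomposition (functional calculus on
the eigenvalues); returns `0` if the matrix is not Hermitian. -/
noncomputable def matFun (A : Matrix ι ι ℂ) (f : ℝ → ℝ) : Matrix ι ι ℂ :=
  if h : A.IsHermitian then h.cfc f else 0

/-- Matrix logarithm taken on the support (eigenvalue `0` is sent to `0`,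
since `Real.log 0 = 0`). -/
noncomputable def matLog (A : Matrix ι ι ℂ) : Matrix ι ι ℂ :=
  matFun A Real.log

/-- Quantum cross entropy `C(ρ₁, ρ₂) = -Tr[ρ₁ ln ρ₂]`, with the logarithm on the support. -/
noncomputable def crossEnt (ρ₁ ρ₂ : Matrix ι ι ℂ) : ℝ :=
  -((ρ₁ * matLog ρ₂).trace.re)

/-- Von Neumann entropy `S(ρ) = -Tr[ρ ln ρ]`. -/
noncomputable def vnEntropy (ρ : Matrix ι ι ℂ) : ℝ :=
  crossEnt ρ ρ

/-- A density matrix: positive semidefinite with unit trace. -/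
def IsDensityMatrix (ρ : Matrix ι ι ℂ) : Prop :=
  ρ.PosSemidef ∧ ρ.trace = 1

/-- The rank-one projector `|v⟩⟨v|`. -/
noncomputable def outer (v : ι → ℂ) : Matrix ι ι ℂ :=
  Matrix.vecMulVec v (star v)

/-- An orthonormal family of vectors. -/
def OrthonormalFam {r : ℕ} (v : Fin r → ι → ℂ) : Prop :=
  ∀ i j, (∑ a, star (v i a) * v j a) = if i = j then (1 : ℂ) else 0

/-- The Choi matrix of a linear map on matrices. -/
noncomputable def choi {κ : Type*} [Fintype κ] [DecidableEq κ]
    (Φ : Matrix ι ι ℂ →ₗ[ℂ] Matrix κ κ ℂ) : Matrix (ι × κ) (ι × κ) ℂ :=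
  ∑ i : ι, ∑ j : ι, (Matrix.single i j (1 : ℂ)) ⊗ₖ (Φ (Matrix.single i j 1))

/-- A quantum channel: completely positive (positive semidefinite Choi matrix, by Choi's
theorem) and trace preserving. -/
def IsCPTP {κ : Type*} [Fintype κ] [DecidableEq κ]
    (Φ : Matrix ι ι ℂ →ₗ[ℂ] Matrix κ κ ℂ) : Prop :=
  (choi Φ).PosSemidef ∧ ∀ ρ : Matrix ι ι ℂ, (Φ ρ).trace = ρ.trace

/-- Partial trace over the second tensor factor. -/
noncomputable def ptraceB {dA dB : ℕ}
    (ρ : Matrix (Fin dA × Fin dB) (Fin dA × Fin dB) ℂ) : Matrix (Fin dA) (Fin dA) ℂ :=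
  Matrix.of fun i j => ∑ k : Fin dB, ρ (i, k) (j, k)

/-- Partial trace over the first tensor factor. -/
noncomputable def ptraceA {dA dB : ℕ}
    (ρ : Matrix (Fin dA × Fin dB) (Fin dA × Fin dB) ℂ) : Matrix (Fin dB) (Fin dB) ℂ :=
  Matrix.of fun i j => ∑ k : Fin dA, ρ (k, i) (k, j)


/-- Matrix square root via the spectral decomposition. -/
noncomputable def matSqrt (A : Matrix ι ι ℂ) : Matrix ι ι ℂ :=
  matFun A Real.sqrt

/-- Quantum fidelity `F[ρ,σ] = (Tr[√(√ρ σ √ρ)])²`. -/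
noncomputable def fidelity (ρ σ : Matrix ι ι ℂ) : ℝ :=
  ((matSqrt (matSqrt ρ * σ * matSqrt ρ)).trace.re) ^ 2

section OrthonormalOuter

open Matrix

variable {n : Type*} {r : ℕ} {v : Fin r → n → ℂ}

lemma isHermitian_sum_smul_outer (p : Fin r → ℝ) :
    (∑ i, (p i : ℂ) • outer (v i)).IsHermitian := by
  simp [IsHermitian, conjTranspose_sum, conjTranspose_smul, outer, conjTranspose_vecMulVec]

variable [Fintype n]

lemma posSemidef_outer (x : n → ℂ) : (outer x).PosSemidef :=
  posSemidef_vecMulVec_self_star x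

lemma outer_mul_outer (hv : OrthonormalFam v) (i j : Fin r) :
    outer (v i) * outer (v j) = if i = j then outer (v i) else 0 := by
  ext a b
  have hsum : ∑ c, v i a * star (v i c) * (v j c * star (v j b))
      = v i a * star (v j b) * ∑ c, star (v i c) * v j c := by
    rw [Finset.mul_sum]; exact Finset.sum_congr rfl fun c _ => by ring
  simp only [mul_apply, outer, vecMulVec_apply, Pi.star_apply, hsum, hv i j]
  split_ifs with hij
  · subst hij; simp [vecMulVec_apply]
  · simp

lemma trace_outer (hv : OrthonormalFam v) (i : Fin r) : (outer (v i)).trace = 1 := by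
  simpa [trace, outer, vecMulVec_apply, mul_comm] using hv i i

lemma trace_sum_smul_outer (hv : OrthonormalFam v) (a : Fin r → ℂ) :
    (∑ i, a i • outer (v i)).trace = ∑ i, a i := by
  simp [trace_sum, trace_smul, trace_outer hv]

lemma outer_mul_sum_smul_outer (hv : OrthonormalFam v) (a : Fin r → ℂ) (i : Fin r) :
    outer (v i) * ∑ j, a j • outer (v j) = a i • outer (v i) := by
  simp [Finset.mul_sum, Matrix.mul_smul, outer_mul_outer hv]

lemma sum_smul_outer_mul_sum_smul_outer (hv : OrthonormalFam v) (a b : Fin r → ℂ) :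
    (∑ i, a i • outer (v i)) * ∑ j, b j • outer (v j) = ∑ i, (a i * b i) • outer (v i) := by
  simp [Finset.sum_mul, Matrix.smul_mul, outer_mul_sum_smul_outer hv, smul_smul]

lemma posSemidef_sum_smul_outer {p : Fin r → ℝ} (hp : ∀ i, 0 ≤ p i) (s : Finset (Fin r)) :
    (∑ j ∈ s, (p j : ℂ) • outer (v j)).PosSemidef :=
  posSemidef_sum s fun j _ => (posSemidef_outer _).smul (Complex.zero_le_real.mpr (hp j))

variable [DecidableEq n]

lemma posSemidef_one_sub_sum_outer (hv : OrthonormalFam v) :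
    (1 - ∑ i, outer (v i)).PosSemidef := by
  set Q := ∑ i, outer (v i)
  have hQQ : Q * Q = Q := by
    simpa using sum_smul_outer_mul_sum_smul_outer hv (fun _ => 1) (fun _ => 1)
  have hQH : Qᴴ = Q := by simpa using (isHermitian_sum_smul_outer (v := v) fun _ => 1).eq
  have hsq : (1 - Q)ᴴ * (1 - Q) = 1 - Q := by
    rw [conjTranspose_sub, conjTranspose_one, hQH, sub_mul, mul_sub, mul_sub, hQQ]
    simp
  exact hsq ▸ posSemidef_conjTranspose_mul_self (1 - Q)

end OrthonormalOuter

section Choi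

open Matrix

variable {n m : Type*} [Fintype n] [DecidableEq n]

lemma map_eq_sum_smul_single {M : Type*} [AddCommMonoid M] [Module ℂ M]
    (Φ : Matrix n n ℂ →ₗ[ℂ] M) (X : Matrix n n ℂ) :
    Φ X = ∑ i, ∑ j, X i j • Φ (single i j 1) := by
  conv_lhs => rw [matrix_eq_sum_single X]
  simp [map_sum, ← _root_.map_smul, smul_single]

variable [Fintype m] [DecidableEq m]

lemma choi_apply (Φ : Matrix n n ℂ →ₗ[ℂ] Matrix m m ℂ) (i j : n) (k l : m) :
    choi Φ (i, k) (j, l) = Φ (single i j 1) k l := by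
  simp [choi, Matrix.sum_apply, single_apply, ite_and]

lemma map_outer_eq_conjTranspose_mul_choi_mul (Φ : Matrix n n ℂ →ₗ[ℂ] Matrix m m ℂ)
    (x : n → ℂ) :
    Φ (outer x) = (of fun (a : n × m) l => if a.2 = l then star (x a.1) else 0)ᴴ
      * choi Φ * of fun (a : n × m) l => if a.2 = l then star (x a.1) else 0 := by
  ext k l
  rw [map_eq_sum_smul_single, Finset.sum_comm]
  simp [Matrix.sum_apply, mul_apply, Fintype.sum_prod_type, choi_apply, outer, vecMulVec_apply,
    apply_ite star, Finset.sum_mul, mul_comm, mul_assoc]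

lemma posSemidef_map_of_choi {Φ : Matrix n n ℂ →ₗ[ℂ] Matrix m m ℂ} (hΦ : (choi Φ).PosSemidef)
    {X : Matrix n n ℂ} (hX : X.PosSemidef) : (Φ X).PosSemidef := by
  obtain ⟨k, x, rfl⟩ := posSemidef_iff_eq_sum_vecMulVec.mp hX
  rw [map_sum]
  refine posSemidef_sum _ fun i _ => ?_
  rw [← outer, map_outer_eq_conjTranspose_mul_choi_mul]
  exact hΦ.conjTranspose_mul_mul_same _

end Choi

section SpectralCalculus

open Matrix Polynomial

variable {n : Type*} [Fintype n] [DecidableEq n]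

lemma matFun_eq_cfc (A : Matrix n n ℂ) (f : ℝ → ℝ) : matFun A f = cfc f A := by
  by_cases hA : A.IsHermitian
  · rw [matFun, dif_pos hA, hA.cfc_eq]
  · rw [matFun, dif_neg hA, cfc_apply_of_not_predicate A (p := IsSelfAdjoint) hA]

lemma trace_conjStarAlgAut (U : unitaryGroup n ℂ) (A : Matrix n n ℂ) :
    (Unitary.conjStarAlgAut ℂ _ U A).trace = A.trace := by
  rw [Unitary.conjStarAlgAut_apply, trace_mul_cycle, Unitary.coe_star_mul_self, Matrix.one_mul]

lemma re_conjStarAlgAut_apply_self_nonneg {A : Matrix n n ℂ} (hA : A.PosSemidef)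
    (U : unitaryGroup n ℂ) (k : n) : 0 ≤ (Unitary.conjStarAlgAut ℂ _ U A k k).re := by
  have hconj := (hA.mul_mul_conjTranspose_same (U : Matrix n n ℂ)).diag_nonneg (i := k)
  exact (Complex.nonneg_iff.mp hconj).1

lemma trace_mul_matFun {σ : Matrix n n ℂ} (hσ : σ.IsHermitian) (A : Matrix n n ℂ) (f : ℝ → ℝ) :
    (A * matFun σ f).trace = ∑ k, (f (hσ.eigenvalues k) : ℂ)
      * Unitary.conjStarAlgAut ℂ _ (star hσ.eigenvectorUnitary) A k k := by
  rw [Unitary.conjStarAlgAut_star_apply]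
  set U : Matrix n n ℂ := (hσ.eigenvectorUnitary : Matrix n n ℂ)
  have hcycle : (A * (U * diagonal (RCLike.ofReal ∘ f ∘ hσ.eigenvalues) * star U)).trace
      = (star U * A * U * diagonal (RCLike.ofReal ∘ f ∘ hσ.eigenvalues)).trace := by
    rw [← Matrix.mul_assoc, trace_mul_comm, ← Matrix.mul_assoc, ← Matrix.mul_assoc]
  simp only [matFun, dif_pos hσ, IsHermitian.cfc, Unitary.conjStarAlgAut_apply]
  rw [hcycle, trace]
  exact Finset.sum_congr rfl fun k _ => by simp [mul_diagonal, mul_comm]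

lemma crossEnt_eq_sum_eigenvalues {σ : Matrix n n ℂ} (hσ : σ.IsHermitian) (A : Matrix n n ℂ) :
    crossEnt A σ = -∑ k, Real.log (hσ.eigenvalues k)
      * (Unitary.conjStarAlgAut ℂ _ (star hσ.eigenvectorUnitary) A k k).re := by
  simp [crossEnt, matLog, trace_mul_matFun hσ, Complex.re_sum]

lemma crossEnt_sum_smul {κ : Type*} [Fintype κ] (p : κ → ℝ) (A : κ → Matrix n n ℂ)
    (σ : Matrix n n ℂ) : crossEnt (∑ i, (p i : ℂ) • A i) σ = ∑ i, p i * crossEnt (A i) σ := by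
  simp [crossEnt, Finset.sum_mul, trace_sum, Complex.re_sum]

end SpectralCalculus

section SpectralDecomposition

open Matrix Polynomial

variable {n : Type*} [Fintype n] [DecidableEq n] {r : ℕ} {v : Fin r → n → ℂ}

lemma outer_mul_aeval_sum_smul_outer (hv : OrthonormalFam v) (p : Fin r → ℝ) (i : Fin r)
    (q : ℝ[X]) :
    outer (v i) * aeval (∑ j, (p j : ℂ) • outer (v j)) q
      = ((q.eval (p i) : ℝ) : ℂ) • outer (v i) := by
  induction q using Polynomial.induction_on with
  | C a => simp [Algebra.algebraMap_eq_smul_one, Complex.coe_smul]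
  | add f g hf hg => rw [map_add, Matrix.mul_add, hf, hg, eval_add, Complex.ofReal_add, add_smul]
  | monomial k a ih =>
    rw [pow_succ, ← mul_assoc, _root_.map_mul, aeval_X, ← Matrix.mul_assoc, ih, Matrix.smul_mul,
      outer_mul_sum_smul_outer hv, smul_smul]
    simp [mul_assoc]

lemma sum_smul_outer_mul_aeval (hv : OrthonormalFam v) (p : Fin r → ℝ) (q : ℝ[X]) :
    (∑ j, (p j : ℂ) • outer (v j)) * aeval (∑ j, (p j : ℂ) • outer (v j)) q
      = ∑ i, ((p i * q.eval (p i) : ℝ) : ℂ) • outer (v i) := by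
  simp only [Finset.sum_mul, Matrix.smul_mul, outer_mul_aeval_sum_smul_outer hv, smul_smul,
    Complex.ofReal_mul]

lemma spectrum_sum_smul_outer_subset (hv : OrthonormalFam v) (p : Fin r → ℝ) :
    spectrum ℝ (∑ j, (p j : ℂ) • outer (v j)) ⊆ insert 0 (Set.range p) := by
  set P : ℝ[X] := X * ∏ y ∈ Finset.univ.image p, (X - C y)
  have hann : aeval (∑ j, (p j : ℂ) • outer (v j)) P = 0 := by
    rw [_root_.map_mul, aeval_X, sum_smul_outer_mul_aeval hv]
    refine Finset.sum_eq_zero fun i _ => ?_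
    rw [eval_prod, Finset.prod_eq_zero (Finset.mem_image_of_mem p (Finset.mem_univ i)) (by simp)]
    simp
  intro x hx
  have hroot := spectrum.subset_polynomial_aeval _ P ⟨x, hx, rfl⟩
  rcases subsingleton_or_nontrivial (Matrix n n ℂ) with _ | _
  · simp [spectrum.of_subsingleton] at hx
  rw [hann, spectrum.zero_eq, Set.mem_singleton_iff] at hroot
  dsimp only at hroot
  rw [eval_mul, eval_X, eval_prod, mul_eq_zero, Finset.prod_eq_zero_iff] at hroot
  rcases hroot with hx0 | ⟨y, hy, hxy⟩
  · exact Or.inl hx0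
  · simp only [Finset.mem_image, Finset.mem_univ, true_and] at hy
    obtain ⟨i, rfl⟩ := hy
    exact Or.inr ⟨i, by simpa [sub_eq_zero, eq_comm] using hxy⟩

lemma matFun_sum_smul_outer (hv : OrthonormalFam v) (p : Fin r → ℝ) {f : ℝ → ℝ} (hf : f 0 = 0) :
    matFun (∑ j, (p j : ℂ) • outer (v j)) f = ∑ i, ((f (p i) : ℝ) : ℂ) • outer (v i) := by
  set S : Finset ℝ := insert 0 (Finset.univ.image p)
  set q : ℝ[X] := Lagrange.interpolate S id f
  have hq : ∀ x ∈ S, q.eval x = f x := fun x hx =>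
    Lagrange.eval_interpolate_at_node f (Set.injOn_id _) hx
  obtain ⟨R, hR⟩ : X ∣ q := X_dvd_iff.mpr <| by
    rw [coeff_zero_eq_eval_zero, hq 0 (Finset.mem_insert_self _ _), hf]
  have hρ : IsSelfAdjoint (∑ j, (p j : ℂ) • outer (v j)) := isHermitian_sum_smul_outer p
  calc matFun (∑ j, (p j : ℂ) • outer (v j)) f
      = cfc q.eval (∑ j, (p j : ℂ) • outer (v j)) := by
        rw [matFun_eq_cfc]
        refine cfc_congr fun x hx => (hq x ?_).symm
        simpa [S] using spectrum_sum_smul_outer_subset hv p hx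
    _ = ∑ i, ((p i * R.eval (p i) : ℝ) : ℂ) • outer (v i) := by
        rw [cfc_polynomial q _ hρ, hR, _root_.map_mul, aeval_X, sum_smul_outer_mul_aeval hv]
    _ = ∑ i, ((f (p i) : ℝ) : ℂ) • outer (v i) := by
        refine Finset.sum_congr rfl fun i _ => ?_
        rw [← hq (p i) (by simp [S]), hR, eval_mul, eval_X]

lemma vnEntropy_sum_smul_outer (hv : OrthonormalFam v) (p : Fin r → ℝ) :
    vnEntropy (∑ j, (p j : ℂ) • outer (v j)) = -∑ i, p i * Real.log (p i) := by
  rw [vnEntropy, crossEnt, matLog, matFun_sum_smul_outer hv p Real.log_zero,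
    sum_smul_outer_mul_sum_smul_outer hv, trace_sum_smul_outer hv]
  simp [Complex.re_sum]

end SpectralDecomposition

section RealInequalities

variable {κ : Type*} [Fintype κ]

lemma exp_sum_mul_log_le {w x : κ → ℝ} (hw : ∀ k, 0 ≤ w k) (hw1 : ∑ k, w k = 1)
    (hx : ∀ k, 0 ≤ x k) (hsupp : ∀ k, x k = 0 → w k = 0) :
    Real.exp (∑ k, w k * Real.log (x k)) ≤ ∑ k, w k * x k := by
  refine (convexOn_exp.map_sum_le (fun k _ => hw k) hw1 fun k _ => Set.mem_univ _).trans_eq ?_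
  refine Finset.sum_congr rfl fun k _ => ?_
  rcases (hx k).eq_or_lt with hk | hk
  · simp [hsupp k hk.symm]
  · rw [smul_eq_mul, Real.exp_log hk]

lemma neg_log_sum_exp_neg_le {p c : κ → ℝ} (hp : ∀ i, 0 < p i) (hp1 : ∑ i, p i = 1) :
    -Real.log (∑ i, Real.exp (-c i)) ≤ ∑ i, p i * c i + ∑ i, p i * Real.log (p i) := by
  have hjensen := strictConcaveOn_log_Ioi.concaveOn.le_map_sum (t := Finset.univ)
    (p := fun i => Real.exp (-c i) / p i)
    (fun i _ => (hp i).le) hp1 fun i _ => div_pos (Real.exp_pos _) (hp i)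
  have hterm : ∀ i, p i • Real.log (Real.exp (-c i) / p i) = -(p i * c i) - p i * Real.log (p i) :=
    fun i => by
      rw [Real.log_div (Real.exp_pos _).ne' (hp i).ne', Real.log_exp, smul_eq_mul]; ring
  have hmean : ∀ i, p i • (Real.exp (-c i) / p i) = Real.exp (-c i) :=
    fun i => by rw [smul_eq_mul, mul_div_cancel₀ _ (hp i).ne']
  simp only [hterm, hmean, Finset.sum_sub_distrib, Finset.sum_neg_distrib] at hjensen
  linarith

end RealInequalities

section CrossEntropyBound

open Matrix

variable {n κ : Type*} [Fintype n] [DecidableEq n] [Fintype κ]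

theorem sum_exp_neg_crossEnt_le_one {σ : Matrix n n ℂ} (hσ : σ.PosSemidef) (hσ1 : σ.trace = 1)
    {A : κ → Matrix n n ℂ} (hA : ∀ i, (A i).PosSemidef) (hA1 : ∀ i, (A i).trace = 1)
    (hsum : (1 - ∑ i, A i).PosSemidef)
    (hdom : ∀ i, ∃ c : ℝ, 0 < c ∧ (σ - (c : ℂ) • A i).PosSemidef) :
    ∑ i, Real.exp (-crossEnt (A i) σ) ≤ 1 := by
  set U := star hσ.isHermitian.eigenvectorUnitary
  set Ψ := Unitary.conjStarAlgAut ℂ (Matrix n n ℂ) U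
  set μ := hσ.isHermitian.eigenvalues
  set w : κ → n → ℝ := fun i k => (Ψ (A i) k k).re
  have hΨσ : ∀ k, (Ψ σ k k).re = μ k := fun k => by
    rw [hσ.isHermitian.conjStarAlgAut_star_eigenvectorUnitary, diagonal_apply_eq]
    simp [μ]
  have hrow : ∀ i, ∑ k, w i k = 1 := fun i => by
    have h := congrArg Complex.re ((trace_conjStarAlgAut U (A i)).trans (hA1 i))
    rwa [trace, Complex.re_sum, Complex.one_re] at h
  have hcol : ∀ k, ∑ i, w i k ≤ 1 := fun k => by
    have h := re_conjStarAlgAut_apply_self_nonneg hsum U k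
    rw [map_sub, map_one, map_sum, Matrix.sub_apply, one_apply_eq, Matrix.sum_apply,
      Complex.sub_re, Complex.one_re, Complex.re_sum] at h
    exact sub_nonneg.mp h
  have hsupp : ∀ i k, μ k = 0 → w i k = 0 := fun i k hk => by
    obtain ⟨c, hc, hdom⟩ := hdom i
    have h := re_conjStarAlgAut_apply_self_nonneg hdom U k
    rw [map_sub, map_smul, Matrix.sub_apply, Matrix.smul_apply, smul_eq_mul, Complex.sub_re,
      Complex.re_ofReal_mul, hΨσ, hk, zero_sub, neg_nonneg] at h
    exact le_antisymm (nonpos_of_mul_nonpos_right h hc)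
      (re_conjStarAlgAut_apply_self_nonneg (hA i) U k)
  have hμ1 : ∑ k, μ k = 1 := by
    have h := congrArg Complex.re ((trace_conjStarAlgAut U σ).trans hσ1)
    rw [trace, Complex.re_sum, Complex.one_re] at h
    simp only [← hΨσ]
    exact h
  calc ∑ i, Real.exp (-crossEnt (A i) σ)
      ≤ ∑ i, ∑ k, w i k * μ k := Finset.sum_le_sum fun i _ => by
        rw [crossEnt_eq_sum_eigenvalues hσ.isHermitian, neg_neg]
        simp_rw [mul_comm (Real.log _)]
        exact exp_sum_mul_log_le (fun k => re_conjStarAlgAut_apply_self_nonneg (hA i) U k)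
          (hrow i) hσ.eigenvalues_nonneg (hsupp i)
    _ = ∑ k, (∑ i, w i k) * μ k := by rw [Finset.sum_comm]; simp [Finset.sum_mul]
    _ ≤ ∑ k, μ k := Finset.sum_le_sum fun k _ =>
        mul_le_of_le_one_left (hσ.eigenvalues_nonneg k) (hcol k)
    _ = 1 := hμ1

end CrossEntropyBound

/-- **Corollary 1, Eq. (14)** (Lower bound under a unital map).
If `Φ` is a unital quantum channel then `ΔS ≥ L_otm ≥ 0`; in particular
`∑ i, e^{-C(Φ(|pᵢ⟩⟨pᵢ|), ρout)} ≤ 1`. -/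
theorem information_production_lower_bound_unital
    {n r : ℕ}
    (Φ : Matrix (Fin n) (Fin n) ℂ →ₗ[ℂ] Matrix (Fin n) (Fin n) ℂ) (hΦ : IsCPTP Φ)
    (hunital : Φ 1 = 1)
    (p : Fin r → ℝ) (hp : ∀ i, 0 < p i) (hp1 : ∑ i, p i = 1)
    (v : Fin r → Fin n → ℂ) (hv : OrthonormalFam v)
    (ρin : Matrix (Fin n) (Fin n) ℂ) (hρin : ρin = ∑ i, (p i : ℂ) • outer (v i))
    (ρout : Matrix (Fin n) (Fin n) ℂ) (hρout : ρout = Φ ρin) :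
    vnEntropy ρout - vnEntropy ρin
        ≥ -Real.log (∑ i, Real.exp (-(crossEnt (Φ (outer (v i))) ρout))) ∧
      -Real.log (∑ i, Real.exp (-(crossEnt (Φ (outer (v i))) ρout))) ≥ 0 ∧
      ∑ i, Real.exp (-(crossEnt (Φ (outer (v i))) ρout)) ≤ 1 := by
  subst hρin hρout
  have hΦρ : Φ (∑ i, (p i : ℂ) • outer (v i)) = ∑ i, (p i : ℂ) • Φ (outer (v i)) := by
    simp only [map_sum, _root_.map_smul]
  have hdom : ∀ i, (Φ (∑ j, (p j : ℂ) • outer (v j)) - (p i : ℂ) • Φ (outer (v i))).PosSemidef :=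
    fun i => by
      rw [← Finset.add_sum_erase _ _ (Finset.mem_univ i), map_add, _root_.map_smul,
        add_sub_cancel_left]
      exact posSemidef_map_of_choi hΦ.1 (posSemidef_sum_smul_outer (fun j => (hp j).le) _)
  have hZ : ∑ i, Real.exp (-crossEnt (Φ (outer (v i))) (Φ (∑ j, (p j : ℂ) • outer (v j)))) ≤ 1 :=
    sum_exp_neg_crossEnt_le_one
      (posSemidef_map_of_choi hΦ.1 (posSemidef_sum_smul_outer (fun j => (hp j).le) _))
      (by rw [hΦ.2, trace_sum_smul_outer hv]; exact_mod_cast hp1)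
      (fun i => posSemidef_map_of_choi hΦ.1 (posSemidef_outer _))
      (fun i => (hΦ.2 _).trans (trace_outer hv i))
      (by simpa [map_sub, map_sum, hunital] using
        posSemidef_map_of_choi hΦ.1 (posSemidef_one_sub_sum_outer hv))
      fun i => ⟨p i, hp i, hdom i⟩
  refine ⟨?_, neg_nonneg.mpr (Real.log_nonpos (by positivity) hZ), hZ⟩
  rw [vnEntropy, vnEntropy_sum_smul_outer hv, congrArg (crossEnt · _) hΦρ, crossEnt_sum_smul]
  linarith [neg_log_sum_exp_neg_le hp hp1
    (c := fun i => crossEnt (Φ (outer (v i))) (Φ (∑ j, (p j : ℂ) • outer (v j))))]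

end QCE
end

section
/- (Eqs. (36)–(38): optimal disentangling unitary gives L_otm = 0) In the quantum autoencoder setup with pure fresh-qubit state ρ_B = |ψ⟩⟨ψ| and input state ρ_in = Σ_{i=1}^r p_i |p_i⟩⟨p_i|, suppose the unitary U satisfies U ρ_in U† = ρ_A ⊗ |ψ⟩⟨ψ| and U |p_i⟩⟨p_i| U† = ρ_A^{(i)} ⊗ |ψ⟩⟨ψ| for all 1 ≤ i ≤ r, where ρ_A = Tr_B[U ρ_in U†] and ρ_A^{(i)} = Tr_B[U |p_i⟩⟨p_i| U†]. Then C(ρ_A^{(i)}, ρ_A) = −ln p_i for all i, and consequently L_otm = −ln( Σ_{i=1}^r e^{−C(Φ(|p_i⟩⟨p_i|), ρ_out)} ) = 0. -/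
open scoped Kronecker BigOperators ComplexOrder

namespace QCE

variable {ι : Type*} [Fintype ι] [DecidableEq ι]

/-!
Contracting the second tensor factor with `⟨ψ|` (the matrix `partialBra`) sends `U|pᵢ⟩`, whose
projector is `ρ_A⁽ⁱ⁾ ⊗ |ψ⟩⟨ψ|`, to a unit vector `aᵢ` with `ρ_A⁽ⁱ⁾ = |aᵢ⟩⟨aᵢ|`, and it turns the
eigen-equation `(ρ_A ⊗ |ψ⟩⟨ψ|) U|pᵢ⟩ = pᵢ U|pᵢ⟩` into `ρ_A aᵢ = pᵢ aᵢ`. By functional calculus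
`ln ρ_A` then acts on `aᵢ` as `ln pᵢ`, so `C(ρ_A⁽ⁱ⁾, ρ_A) = -ln pᵢ`. For the same reason
`C(|pᵢ⟩⟨pᵢ|, ρ_in) = -ln pᵢ`, and `Φ` fixes both `ρ_in` and every `|pᵢ⟩⟨pᵢ|`, so the `i`-th term
of the sum defining `L_otm` is `pᵢ` and the sum is `1`.
-/
open Matrix

section Outer

theorem outer_isHermitian {α : Type*} (v : α → ℂ) : (outer v).IsHermitian := by
  simp [Matrix.IsHermitian, outer]

variable {α β : Type*} [Fintype α]

theorem outer_mulVec (v x : α → ℂ) : outer v *ᵥ x = (star v ⬝ᵥ x) • v := by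
  rw [outer, vecMulVec_mulVec, op_smul_eq_smul]

theorem trace_outer_s14 (v : α → ℂ) : (outer v).trace = star v ⬝ᵥ v := by
  rw [outer, trace_vecMulVec, dotProduct_comm]

theorem trace_outer_mul (v : α → ℂ) (L : Matrix α α ℂ) :
    (outer v * L).trace = star v ⬝ᵥ (L *ᵥ v) := by
  rw [trace_mul_comm, outer, mul_vecMulVec, trace_vecMulVec, dotProduct_comm]

theorem mul_outer_mul_conjTranspose (M : Matrix β α ℂ) (v : α → ℂ) :
    M * outer v * Mᴴ = outer (M *ᵥ v) := by
  rw [outer, outer, mul_vecMulVec, vecMulVec_mul, star_mulVec]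

end Outer

section Isometry

variable {α β : Type*} [Fintype α] [DecidableEq α] [Fintype β] {U : Matrix β α ℂ}

theorem star_mulVec_dotProduct_mulVec (hU : Uᴴ * U = 1) (x y : α → ℂ) :
    star (U *ᵥ x) ⬝ᵥ (U *ᵥ y) = star x ⬝ᵥ y := by
  rw [star_mulVec, ← dotProduct_mulVec, mulVec_mulVec, hU, one_mulVec]

theorem conjTranspose_mul_conj_mul (hU : Uᴴ * U = 1) (A : Matrix α α ℂ) :
    Uᴴ * (U * A * Uᴴ) * U = A := by
  rw [Matrix.mul_assoc, Matrix.mul_assoc, hU, Matrix.mul_one, ← Matrix.mul_assoc, hU,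
    Matrix.one_mul]

theorem conj_mulVec_mulVec (hU : Uᴴ * U = 1) (A : Matrix α α ℂ) (v : α → ℂ) :
    (U * A * Uᴴ) *ᵥ (U *ᵥ v) = U *ᵥ (A *ᵥ v) := by
  rw [mulVec_mulVec, Matrix.mul_assoc, Matrix.mul_assoc, hU, Matrix.mul_one, ← mulVec_mulVec]

end Isometry

section PartialBra

/-- `𝟙 ⊗ ⟨ψ|`. -/
noncomputable def partialBra (α : Type*) {β : Type*} [DecidableEq α] (ψ : β → ℂ) :
    Matrix α (α × β) ℂ :=
  Matrix.of fun x yb => if x = yb.1 then star (ψ yb.2) else 0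

variable {α β : Type*} [Fintype α] [DecidableEq α] [Fintype β] {ψ : β → ℂ}

theorem partialBra_mul_kronecker_outer (hψ : star ψ ⬝ᵥ ψ = 1) (R : Matrix α α ℂ) :
    partialBra α ψ * (R ⊗ₖ outer ψ) = R * partialBra α ψ := by
  ext x ⟨y, c⟩
  have hψ' : ∑ b, star (ψ b) * ψ b = 1 := hψ
  simp only [partialBra, mul_apply, Fintype.sum_prod_type_right, of_apply, kroneckerMap_apply,
    outer, vecMulVec_apply, ite_mul, zero_mul, Finset.sum_ite_eq, Finset.mem_univ, if_true,
    mul_ite, mul_zero, Finset.sum_ite_eq']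
  calc ∑ b, star (ψ b) * (R x y * (ψ b * star (ψ c)))
      = (∑ b, star (ψ b) * ψ b) * (R x y * star (ψ c)) := by
        rw [Finset.sum_mul]; exact Finset.sum_congr rfl fun b _ => by ring
    _ = R x y * star (ψ c) := by rw [hψ', one_mul]

theorem partialBra_mul_conjTranspose (hψ : star ψ ⬝ᵥ ψ = 1) :
    partialBra α ψ * (partialBra α ψ)ᴴ = (1 : Matrix α α ℂ) := by
  ext x y
  have hψ' : ∑ b, starRingEnd ℂ (ψ b) * ψ b = 1 := hψ
  rcases eq_or_ne x y with rfl | hxy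
  · simp [partialBra, mul_apply, Fintype.sum_prod_type_right, hψ']
  · simp [partialBra, mul_apply, Fintype.sum_prod_type_right, hxy, hxy.symm]

theorem partialBra_conj_kronecker_outer (hψ : star ψ ⬝ᵥ ψ = 1) (R : Matrix α α ℂ) :
    partialBra α ψ * (R ⊗ₖ outer ψ) * (partialBra α ψ)ᴴ = R := by
  rw [partialBra_mul_kronecker_outer hψ, Matrix.mul_assoc, partialBra_mul_conjTranspose hψ,
    Matrix.mul_one]

theorem mulVec_partialBra_mulVec_of_mulVec_eq (hψ : star ψ ⬝ᵥ ψ = 1) {R : Matrix α α ℂ}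
    {μ : ℂ} {w : α × β → ℂ} (h : (R ⊗ₖ outer ψ) *ᵥ w = μ • w) :
    R *ᵥ (partialBra α ψ *ᵥ w) = μ • (partialBra α ψ *ᵥ w) := by
  rw [mulVec_mulVec, ← partialBra_mul_kronecker_outer hψ, ← mulVec_mulVec, h, mulVec_smul]

theorem outer_partialBra_mulVec (hψ : star ψ ⬝ᵥ ψ = 1) {R : Matrix α α ℂ} {w : α × β → ℂ}
    (h : outer w = R ⊗ₖ outer ψ) : outer (partialBra α ψ *ᵥ w) = R := by
  rw [← mul_outer_mul_conjTranspose, h, partialBra_conj_kronecker_outer hψ]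

theorem star_partialBra_mulVec_dotProduct (hψ : star ψ ⬝ᵥ ψ = 1) {R : Matrix α α ℂ}
    {w : α × β → ℂ} (h : outer w = R ⊗ₖ outer ψ) :
    star (partialBra α ψ *ᵥ w) ⬝ᵥ (partialBra α ψ *ᵥ w) = star w ⬝ᵥ w := by
  rw [← trace_outer_s14, ← trace_outer_s14, outer_partialBra_mulVec hψ h, h, trace_kronecker,
    trace_outer_s14 ψ, hψ, mul_one]

end PartialBra

section Spectral

theorem matFun_mulVec_of_mulVec_eq {A : Matrix ι ι ℂ} (hA : A.IsHermitian) (f : ℝ → ℝ) {μ : ℝ}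
    {u : ι → ℂ} (hu : A *ᵥ u = (μ : ℂ) • u) : matFun A f *ᵥ u = (f μ : ℂ) • u := by
  set V : Matrix ι ι ℂ := (hA.eigenvectorUnitary : Matrix ι ι ℂ)
  have hVV : star V * V = 1 := Unitary.coe_star_mul_self _
  have hVV' : V * star V = 1 := Unitary.coe_mul_star_self _
  set c := star V *ᵥ u
  -- `c` are the coordinates of `u` in the eigenbasis; only eigenvalues equal to `μ` carry weight
  have hc : diagonal (RCLike.ofReal ∘ hA.eigenvalues) *ᵥ c = (μ : ℂ) • c := by
    calc _ = star V *ᵥ (A *ᵥ u) := by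
          conv_rhs => rw [hA.spectral_theorem, Unitary.conjStarAlgAut_apply]
          change _ = star V *ᵥ ((V * _ * star V) *ᵥ u)
          rw [mulVec_mulVec, mulVec_mulVec, ← Matrix.mul_assoc, ← Matrix.mul_assoc, hVV,
            Matrix.one_mul, ← mulVec_mulVec]
      _ = _ := by rw [hu, mulVec_smul]
  have hfc : diagonal (RCLike.ofReal ∘ f ∘ hA.eigenvalues) *ᵥ c = (f μ : ℂ) • c := by
    ext k
    rcases eq_or_ne (c k) 0 with h | h
    · simp [mulVec_diagonal, h]
    · have hk := congrFun hc k
      simp only [mulVec_diagonal, Function.comp_apply, Pi.smul_apply, smul_eq_mul] at hk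
      have : hA.eigenvalues k = μ := by simpa using mul_right_cancel₀ h hk
      simp [mulVec_diagonal, this]
  rw [matFun, dif_pos hA, IsHermitian.cfc, Unitary.conjStarAlgAut_apply, ← mulVec_mulVec,
    ← mulVec_mulVec]
  change V *ᵥ (diagonal (RCLike.ofReal ∘ f ∘ hA.eigenvalues) *ᵥ c) = _
  rw [hfc, mulVec_smul, mulVec_mulVec, hVV', one_mulVec]

theorem crossEnt_outer_of_mulVec_eq {ρ : Matrix ι ι ℂ} (hρ : ρ.IsHermitian) {v : ι → ℂ}
    (hv : star v ⬝ᵥ v = 1) {μ : ℝ} (hρv : ρ *ᵥ v = (μ : ℂ) • v) :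
    crossEnt (outer v) ρ = -Real.log μ := by
  rw [crossEnt, trace_outer_mul, matLog, matFun_mulVec_of_mulVec_eq hρ _ hρv, dotProduct_smul, hv]
  simp

end Spectral

section Mixture

variable {κ : Type*} {r : ℕ} (p : Fin r → ℝ) {v : Fin r → κ → ℂ}

theorem mixture_isHermitian (v : Fin r → κ → ℂ) :
    (∑ i, (p i : ℂ) • outer (v i)).IsHermitian := by
  simp [IsHermitian, conjTranspose_sum, (outer_isHermitian _).eq]

theorem mixture_mulVec_of_orthonormal [Fintype κ] (hv : OrthonormalFam v) (j : Fin r) :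
    (∑ i, (p i : ℂ) • outer (v i)) *ᵥ v j = (p j : ℂ) • v j := by
  have hv' : ∀ i, star (v i) ⬝ᵥ v j = if i = j then 1 else 0 := (hv · j)
  simp [sum_mulVec, smul_mulVec, outer_mulVec, hv']

theorem crossEnt_outer_mixture [Fintype κ] [DecidableEq κ] (hv : OrthonormalFam v) (j : Fin r) :
    crossEnt (outer (v j)) (∑ i, (p i : ℂ) • outer (v i)) = -Real.log (p j) :=
  crossEnt_outer_of_mulVec_eq (mixture_isHermitian p v) (by simpa [dotProduct] using hv j j)
    (mixture_mulVec_of_orthonormal p hv j)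

end Mixture

theorem crossEnt_of_conj_eq_kronecker_outer {α β γ : Type*} [Fintype α] [DecidableEq α]
    [Fintype β] [Fintype γ] [DecidableEq γ] {U : Matrix (α × β) γ ℂ} (hU : Uᴴ * U = 1)
    {ψ : β → ℂ} (hψ : star ψ ⬝ᵥ ψ = 1) {ρ : Matrix γ γ ℂ} (hρ : ρ.IsHermitian) {v : γ → ℂ}
    (hv : star v ⬝ᵥ v = 1) {p : ℝ} (hρv : ρ *ᵥ v = (p : ℂ) • v) {σ τ : Matrix α α ℂ}
    (hσ : U * ρ * Uᴴ = σ ⊗ₖ outer ψ) (hτ : U * outer v * Uᴴ = τ ⊗ₖ outer ψ) :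
    crossEnt τ σ = -Real.log p := by
  have hw : outer (U *ᵥ v) = τ ⊗ₖ outer ψ := by rw [← mul_outer_mul_conjTranspose, hτ]
  have hσ_herm : σ.IsHermitian := by
    rw [← partialBra_conj_kronecker_outer hψ σ, ← hσ]
    exact isHermitian_mul_mul_conjTranspose _ (isHermitian_mul_mul_conjTranspose _ hρ)
  have hσ_eig : (σ ⊗ₖ outer ψ) *ᵥ (U *ᵥ v) = (p : ℂ) • (U *ᵥ v) := by
    rw [← hσ, conj_mulVec_mulVec hU, hρv, mulVec_smul]
  rw [← outer_partialBra_mulVec hψ hw]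
  refine crossEnt_outer_of_mulVec_eq hσ_herm ?_ (mulVec_partialBra_mulVec_of_mulVec_eq hψ hσ_eig)
  rw [star_partialBra_mulVec_dotProduct hψ hw, star_mulVec_dotProduct_mulVec hU, hv]

theorem qae_optimal_unitary_Lotm_zero_general
    {dA dB r : ℕ}
    (U : Matrix (Fin dA × Fin dB) (Fin dA × Fin dB) ℂ)
    (hU : U * U.conjTranspose = 1 ∧ U.conjTranspose * U = 1)
    (ψ : Fin dB → ℂ) (hψ : ∑ a, star (ψ a) * ψ a = 1)
    (p : Fin r → ℝ) (hp : ∀ i, 0 < p i) (hp1 : ∑ i, p i = 1)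
    (v : Fin r → (Fin dA × Fin dB) → ℂ) (hv : OrthonormalFam v)
    (ρin : Matrix (Fin dA × Fin dB) (Fin dA × Fin dB) ℂ)
    (hρin : ρin = ∑ i, (p i : ℂ) • outer (v i))
    (ρA : Matrix (Fin dA) (Fin dA) ℂ)
    (ρAi : Fin r → Matrix (Fin dA) (Fin dA) ℂ)
    (ρout : Matrix (Fin dA × Fin dB) (Fin dA × Fin dB) ℂ)
    (hρout : ρout = U.conjTranspose * (ρA ⊗ₖ outer ψ) * U)
    (Φi : Fin r → Matrix (Fin dA × Fin dB) (Fin dA × Fin dB) ℂ)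
    (hΦi : ∀ i, Φi i = U.conjTranspose * ((ρAi i) ⊗ₖ outer ψ) * U)
    (hopt : U * ρin * U.conjTranspose = ρA ⊗ₖ outer ψ)
    (hopti : ∀ i, U * outer (v i) * U.conjTranspose = (ρAi i) ⊗ₖ outer ψ) :
    (∀ i, crossEnt (ρAi i) ρA = -Real.log (p i)) ∧
      -Real.log (∑ i, Real.exp (-(crossEnt (Φi i) ρout))) = 0 := by
  subst hρin
  refine ⟨fun i => crossEnt_of_conj_eq_kronecker_outer hU.2 hψ (mixture_isHermitian p v)
    (by simpa [dotProduct] using hv i i) (mixture_mulVec_of_orthonormal p hv i) hopt (hopti i), ?_⟩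
  have hterm : ∀ i, Real.exp (-crossEnt (Φi i) ρout) = p i := fun i => by
    rw [hΦi, ← hopti, hρout, ← hopt, conjTranspose_mul_conj_mul hU.2,
      conjTranspose_mul_conj_mul hU.2, crossEnt_outer_mixture p hv, neg_neg, Real.exp_log (hp i)]
  rw [Finset.sum_congr rfl fun i _ => hterm i, hp1, Real.log_one, neg_zero]

/-- **Eqs. (36)–(38)** (Optimal disentangling unitary gives `L_otm = 0`).
If `U ρin U† = ρ_A ⊗ |ψ⟩⟨ψ|` and `U |pᵢ⟩⟨pᵢ| U† = ρ_A⁽ⁱ⁾ ⊗ |ψ⟩⟨ψ|` for all `i`, then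
`C(ρ_A⁽ⁱ⁾, ρ_A) = -ln pᵢ` for all `i`, and consequently `L_otm = 0`. -/
theorem qae_optimal_unitary_Lotm_zero
    {dA dB r : ℕ}
    (U : Matrix (Fin dA × Fin dB) (Fin dA × Fin dB) ℂ)
    (hU : U * U.conjTranspose = 1 ∧ U.conjTranspose * U = 1)
    (ψ : Fin dB → ℂ) (hψ : ∑ a, star (ψ a) * ψ a = 1)
    (p : Fin r → ℝ) (hp : ∀ i, 0 < p i) (hp1 : ∑ i, p i = 1)
    (v : Fin r → (Fin dA × Fin dB) → ℂ) (hv : OrthonormalFam v)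
    (ρin : Matrix (Fin dA × Fin dB) (Fin dA × Fin dB) ℂ)
    (hρin : ρin = ∑ i, (p i : ℂ) • outer (v i))
    (ρA : Matrix (Fin dA) (Fin dA) ℂ) (hρA : ρA = ptraceB (U * ρin * U.conjTranspose))
    (ρAi : Fin r → Matrix (Fin dA) (Fin dA) ℂ)
    (hρAi : ∀ i, ρAi i = ptraceB (U * outer (v i) * U.conjTranspose))
    (ρout : Matrix (Fin dA × Fin dB) (Fin dA × Fin dB) ℂ)
    (hρout : ρout = U.conjTranspose * (ρA ⊗ₖ outer ψ) * U)
    (Φi : Fin r → Matrix (Fin dA × Fin dB) (Fin dA × Fin dB) ℂ)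
    (hΦi : ∀ i, Φi i = U.conjTranspose * ((ρAi i) ⊗ₖ outer ψ) * U)
    (hopt : U * ρin * U.conjTranspose = ρA ⊗ₖ outer ψ)
    (hopti : ∀ i, U * outer (v i) * U.conjTranspose = (ρAi i) ⊗ₖ outer ψ) :
    (∀ i, crossEnt (ρAi i) ρA = -Real.log (p i)) ∧
      -Real.log (∑ i, Real.exp (-(crossEnt (Φi i) ρout))) = 0 :=
  qae_optimal_unitary_Lotm_zero_general U hU ψ hψ p hp hp1 v hv ρin hρin ρA ρAi ρout hρout Φi hΦi
    hopt hopti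

end QCE
end
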